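/- For any symmetric monotone norm ‖·‖ on ℝ^n with ρ := ‖(1,...,1)‖ / ‖e_1‖, there exists an ordered norm ‖·‖' (i.e., ‖x‖' = ⟨a, x^↓⟩ for some descending nonnegative weight vector a) such that ‖x‖ ≤ ‖x‖' ≤ 2(log₂ ρ + 1)·‖x‖ for all x ∈ ℝ_{\geq 0}^n. -/

import Mathlib

/-- The descending rearrangement `x^↓` of a vector `x`. -/
noncomputable def sortDesc {n : ℕ} (x : Fin n → ℝ) : Fin n → ℝ :=
  fun i => x (Tuple.sort x i.rev)

/-!
Write `c = ‖e₁‖` and `B k = ‖1_{[0,k)}‖`, so that `c = B 1 ≤ B k ≤ B n = ρ c`. For each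
`t ≤ ⌊log₂ ρ⌋` let `K t` be the first `k` with `2 ^ t c ≤ B k`, and take the ordered norm
`‖x‖' = ∑ₜ (2 ^ (t + 1) c / K t) · (sum of the `K t` largest entries of `x`)`.
Averaging `x` over cyclic shifts shows `(sum of the K largest entries of x) · B K ≤ K ‖x‖`, so each
of the `⌊log₂ ρ⌋ + 1` terms is at most `2 ‖x‖`. Conversely, for the scale `t` with
`2 ^ t c ≤ B k < 2 ^ (t + 1) c` the `t`-th term alone gives `B k ≤ ‖1_{[0,k)}‖'`; as a sorted
nonnegative vector is a nonnegative combination of the indicators `1_{[0,k)}` (layer cake), this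
gives `‖x‖ ≤ ‖x‖'`.
-/

open Finset Real

theorem Seminorm.sum_mul_le_card_mul_of_perm_invariant {ι : Type*} [Fintype ι] [DecidableEq ι]
    (p : Seminorm ℝ (ι → ℝ)) (hp : ∀ (σ : Equiv.Perm ι) (x : ι → ℝ), p (x ∘ σ) = p x)
    (s : Finset ι) {w : ι → ℝ} (hw : ∀ i ∉ s, w i = 0) :
    (∑ i ∈ s, w i) * p (fun i => if i ∈ s then 1 else 0) ≤ #s * p w := by
  obtain rfl | hs := s.eq_empty_or_nonempty
  · simp
  have : NeZero #s := ⟨hs.card_pos.ne'⟩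
  let e := s.equivFin
  let σ : Fin #s → Equiv.Perm ι := fun j =>
    Equiv.Perm.ofSubtype (e.trans ((Equiv.addRight j).trans e.symm))
  -- the shifts `σ j` rotate `s` cyclically, so they average `w` to a constant on `s`
  have hcyc : ∑ j, w ∘ σ j = (∑ i ∈ s, w i) • fun i => if i ∈ s then 1 else 0 := by
    ext i
    by_cases hi : i ∈ s
    · have hσ : ∀ j, σ j i = e.symm (e ⟨i, hi⟩ + j) := fun j =>
        Equiv.Perm.ofSubtype_apply_of_mem _ hi
      simp only [Finset.sum_apply, Function.comp_apply, hσ, Pi.smul_apply, if_pos hi, smul_eq_mul,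
        mul_one]
      exact (Equiv.sum_comp ((Equiv.addLeft (e ⟨i, hi⟩)).trans e.symm) (fun x => w x)).trans
        (sum_coe_sort s w)
    · simp [σ, Equiv.Perm.ofSubtype_apply_of_not_mem _ hi, hw i hi, hi]
  calc (∑ i ∈ s, w i) * p (fun i => if i ∈ s then 1 else 0)
      ≤ |∑ i ∈ s, w i| * p (fun i => if i ∈ s then 1 else 0) :=
        mul_le_mul_of_nonneg_right (le_abs_self _) (apply_nonneg _ _)
    _ = p (∑ j, w ∘ σ j) := by rw [hcyc, map_smul_eq_mul, norm_eq_abs]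
    _ ≤ ∑ j, p (w ∘ σ j) := le_sum_of_subadditive p (map_zero p).le (map_add_le_add p) _ _
    _ = #s * p w := by simp [hp]

section Prefix

variable {n : ℕ}

def prefixOnes (k : ℕ) : Fin n → ℝ := fun i => if (i : ℕ) < k then 1 else 0

theorem prefixOnes_zero : (prefixOnes 0 : Fin n → ℝ) = 0 := by
  ext i; simp [prefixOnes]

theorem prefixOnes_of_le {k : ℕ} (h : n ≤ k) : (prefixOnes k : Fin n → ℝ) = 1 := by
  ext i; simp [prefixOnes, i.isLt.trans_le h]

theorem prefixOnes_one (hn : 0 < n) : (prefixOnes 1 : Fin n → ℝ) = Pi.single ⟨0, hn⟩ 1 := by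
  ext i; simp [prefixOnes, Pi.single_apply, Fin.ext_iff]

theorem prefixOnes_nonneg (k : ℕ) : (0 : Fin n → ℝ) ≤ prefixOnes k := fun i => by
  unfold prefixOnes; split_ifs <;> norm_num

theorem prefixOnes_le_one (k : ℕ) : (prefixOnes k : Fin n → ℝ) ≤ 1 := fun i => by
  unfold prefixOnes; split_ifs <;> norm_num

theorem prefixOnes_mono : Monotone (prefixOnes : ℕ → Fin n → ℝ) := fun k l hkl i => by
  unfold prefixOnes; split_ifs <;> first | omega | norm_num

theorem antitone_prefixOnes (k : ℕ) : Antitone (prefixOnes k : Fin n → ℝ) := fun i j hij => by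
  unfold prefixOnes; split_ifs <;> first | omega | norm_num

theorem prefixOnes_dotProduct_prefixOnes {j k : ℕ} (hjk : j ≤ k) (hjn : j ≤ n) :
    (prefixOnes j : Fin n → ℝ) ⬝ᵥ prefixOnes k = j := by
  have : ∀ i : Fin n, prefixOnes j i * prefixOnes k i = if (i : ℕ) < j then (1 : ℝ) else 0 := by
    intro i; unfold prefixOnes; split_ifs <;> first | omega | norm_num
  simp only [dotProduct, this, sum_boole, Fin.card_filter_val_lt, min_eq_right hjn]

/-- Layer-cake decomposition of a vector into prefix indicators. -/
theorem sum_sub_smul_prefixOnes (u : ℕ → ℝ) :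
    ∑ k ∈ range n, (u k - u (k + 1)) • (prefixOnes (k + 1) : Fin n → ℝ) =
      fun i : Fin n => u i - u n := by
  ext i
  simp only [Finset.sum_apply, Pi.smul_apply, prefixOnes, smul_eq_mul, mul_ite, mul_one, mul_zero]
  rw [← sum_filter]
  have : (range n).filter (fun k => (i : ℕ) < k + 1) = Ico (i : ℕ) n := by
    ext k; simp only [mem_filter, mem_range, mem_Ico]; omega
  rw [this]
  simpa only [neg_sub_neg] using sum_Ico_sub (fun k => -u k) i.isLt.le

end Prefix

namespace Seminorm

variable {n : ℕ} (p : Seminorm ℝ (Fin n → ℝ))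

theorem le_dotProduct_of_antitone {a : Fin n → ℝ}
    (ha : ∀ k, p (prefixOnes k) ≤ a ⬝ᵥ prefixOnes k) {y : Fin n → ℝ} (hy : Antitone y)
    (hy₀ : 0 ≤ y) : p y ≤ a ⬝ᵥ y := by
  set u : ℕ → ℝ := fun m => if hm : m < n then y ⟨m, hm⟩ else 0
  have hu : ∀ k, 0 ≤ u k - u (k + 1) := by
    intro k
    rw [sub_nonneg]
    by_cases hk : k + 1 < n
    · simp only [u, dif_pos hk, dif_pos (Nat.lt_of_succ_lt hk)]
      exact hy (Fin.mk_le_mk.2 k.le_succ)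
    · simp only [u, dif_neg hk]
      split_ifs
      exacts [hy₀ _, le_rfl]
  have hdecomp : ∑ k ∈ range n, (u k - u (k + 1)) • prefixOnes (k + 1) = y := by
    rw [sum_sub_smul_prefixOnes]
    ext i
    simp [u]
  calc p y = p (∑ k ∈ range n, (u k - u (k + 1)) • prefixOnes (k + 1)) := by rw [hdecomp]
    _ ≤ ∑ k ∈ range n, (u k - u (k + 1)) * p (prefixOnes (k + 1)) := by
      refine (le_sum_of_subadditive p (map_zero p).le (map_add_le_add p) _ _).trans_eq ?_
      simp only [map_smul_eq_mul, norm_eq_abs, abs_of_nonneg (hu _)]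
    _ ≤ ∑ k ∈ range n, (u k - u (k + 1)) * (a ⬝ᵥ prefixOnes (k + 1)) := by
      gcongr with k
      · exact hu k
      · exact ha _
    _ = a ⬝ᵥ y := by
      rw [← hdecomp, dotProduct_sum]
      simp only [dotProduct_smul, smul_eq_mul]

theorem prefixOnes_dotProduct_mul_le (hsym : ∀ (σ : Equiv.Perm (Fin n)) x, p (x ∘ σ) = p x)
    (hmono : ∀ x y, 0 ≤ x → x ≤ y → p x ≤ p y) {k : ℕ} (hk : k ≤ n) {y : Fin n → ℝ}
    (hy : 0 ≤ y) : (prefixOnes k ⬝ᵥ y) * p (prefixOnes k) ≤ k * p y := by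
  set s : Finset (Fin n) := {i | (i : ℕ) < k}
  have hs : ∀ i, i ∈ s ↔ (i : ℕ) < k := by simp [s]
  set w : Fin n → ℝ := fun i => if i ∈ s then y i else 0
  have hw₀ : 0 ≤ w := fun i => by dsimp only [w]; split_ifs; exacts [hy i, le_rfl]
  have hwy : w ≤ y := fun i => by dsimp only [w]; split_ifs; exacts [le_rfl, hy i]
  have key := p.sum_mul_le_card_mul_of_perm_invariant hsym s (w := w) (fun i hi => if_neg hi)
  have hcard : #s = k := by simp [s, Fin.card_filter_val_lt, min_eq_right hk]
  have hsum : ∑ i ∈ s, w i = prefixOnes k ⬝ᵥ y := by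
    rw [sum_congr rfl fun i hi => if_pos hi]
    simp [s, dotProduct, prefixOnes, sum_filter]
  have hind : (fun i => if i ∈ s then (1 : ℝ) else 0) = prefixOnes k := by
    ext i; simp [prefixOnes, hs]
  rw [hsum, hind, hcard] at key
  exact key.trans (by gcongr; exact hmono w y hw₀ hwy)

end Seminorm

theorem antitone_sortDesc {n : ℕ} (x : Fin n → ℝ) : Antitone (sortDesc x) :=
  fun _ _ hij => Tuple.monotone_sort x (Fin.rev_le_rev.mpr hij)

theorem sortDesc_eq_comp {n : ℕ} (x : Fin n → ℝ) :
    sortDesc x = x ∘ (Fin.revPerm.trans (Tuple.sort x)) := rfl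

theorem pow_natFloor_logb_le {b x : ℝ} (hb : 1 < b) (hx : 1 ≤ x) : b ^ ⌊logb b x⌋₊ ≤ x :=
  calc b ^ ⌊logb b x⌋₊ = b ^ (⌊logb b x⌋₊ : ℝ) := (rpow_natCast b _).symm
    _ ≤ b ^ logb b x := rpow_le_rpow_of_exponent_le hb.le (Nat.floor_le (logb_nonneg hb hx))
    _ = x := rpow_logb (by linarith) hb.ne' (by linarith)

theorem lt_pow_natFloor_logb_add_one {b x : ℝ} (hb : 1 < b) (hx : 0 < x) :
    x < b ^ (⌊logb b x⌋₊ + 1) :=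
  calc x = b ^ logb b x := (rpow_logb (by linarith) hb.ne' hx).symm
    _ < b ^ ((⌊logb b x⌋₊ : ℝ) + 1) := rpow_lt_rpow_of_exponent_lt hb (Nat.lt_floor_add_one _)
    _ = b ^ (⌊logb b x⌋₊ + 1) := by rw [← rpow_natCast]; push_cast; rfl

section Dyadic

variable {n : ℕ} (p : Seminorm ℝ (Fin n → ℝ))

/-- `⌊log₂ ρ⌋` for `ρ = p 1 / p e₁`. -/
noncomputable def dyadicDepth : ℕ := ⌊logb 2 (p 1 / p (prefixOnes 1))⌋₊

noncomputable def dyadicThreshold (t : ℕ) : ℕ :=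
  sInf {k | 2 ^ t * p (prefixOnes 1) ≤ p (prefixOnes k)}

noncomputable def dyadicCoeff (t : ℕ) : ℝ := 2 ^ (t + 1) * p (prefixOnes 1) / dyadicThreshold p t

noncomputable def dyadicWeights : Fin n → ℝ :=
  ∑ t ∈ range (dyadicDepth p + 1), dyadicCoeff p t • prefixOnes (dyadicThreshold p t)

theorem dyadicCoeff_nonneg (t : ℕ) : 0 ≤ dyadicCoeff p t := by
  unfold dyadicCoeff; positivity

theorem dyadicWeights_nonneg : 0 ≤ dyadicWeights p :=
  sum_nonneg fun t _ => smul_nonneg (dyadicCoeff_nonneg p t) (prefixOnes_nonneg _)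

theorem antitone_dyadicWeights : Antitone (dyadicWeights p) := fun i j hij => by
  simp only [dyadicWeights, Finset.sum_apply, Pi.smul_apply, smul_eq_mul]
  exact sum_le_sum fun t _ =>
    mul_le_mul_of_nonneg_left (antitone_prefixOnes _ hij) (dyadicCoeff_nonneg p t)

theorem dyadicThreshold_le {t k : ℕ} (h : 2 ^ t * p (prefixOnes 1) ≤ p (prefixOnes k)) :
    dyadicThreshold p t ≤ k :=
  Nat.sInf_le h

variable {p}

theorem two_pow_mul_le_of_le_dyadicDepth (hmono : ∀ x y, 0 ≤ x → x ≤ y → p x ≤ p y)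
    (hc : 0 < p (prefixOnes 1)) {t : ℕ} (ht : t ≤ dyadicDepth p) :
    2 ^ t * p (prefixOnes 1) ≤ p 1 := by
  have hρ : 1 ≤ p 1 / p (prefixOnes 1) := by
    rw [one_le_div hc]
    exact hmono _ _ (prefixOnes_nonneg 1) (prefixOnes_le_one 1)
  rw [← le_div_iff₀ hc]
  exact (pow_le_pow_right₀ one_le_two ht).trans (pow_natFloor_logb_le one_lt_two hρ)

theorem dyadicThreshold_spec (hmono : ∀ x y, 0 ≤ x → x ≤ y → p x ≤ p y)
    (hc : 0 < p (prefixOnes 1)) {t : ℕ} (ht : t ≤ dyadicDepth p) :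
    0 < dyadicThreshold p t ∧ dyadicThreshold p t ≤ n ∧
      2 ^ t * p (prefixOnes 1) ≤ p (prefixOnes (dyadicThreshold p t)) := by
  have hn : 2 ^ t * p (prefixOnes 1) ≤ p (prefixOnes n) := by
    rw [prefixOnes_of_le le_rfl]; exact two_pow_mul_le_of_le_dyadicDepth hmono hc ht
  have hmem : 2 ^ t * p (prefixOnes 1) ≤ p (prefixOnes (dyadicThreshold p t)) :=
    Nat.sInf_mem (s := {k | 2 ^ t * p (prefixOnes 1) ≤ p (prefixOnes k)}) ⟨n, hn⟩
  refine ⟨Nat.pos_of_ne_zero fun h0 => ?_, dyadicThreshold_le p hn, hmem⟩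
  rw [h0, prefixOnes_zero, map_zero] at hmem
  have : 0 < 2 ^ t * p (prefixOnes 1) := by positivity
  linarith

theorem prefixOnes_le_dyadicWeights (hmono : ∀ x y, 0 ≤ x → x ≤ y → p x ≤ p y)
    (hc : 0 < p (prefixOnes 1)) (k : ℕ) :
    p (prefixOnes k) ≤ dyadicWeights p ⬝ᵥ prefixOnes k := by
  rcases Nat.eq_zero_or_pos k with rfl | hk
  · simp [prefixOnes_zero]
  set c := p (prefixOnes 1)
  have hr : 1 ≤ p (prefixOnes k) / c :=
    (one_le_div hc).2 (hmono _ _ (prefixOnes_nonneg 1) (prefixOnes_mono hk))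
  -- the single term of scale `s` already dominates `p (prefixOnes k)`
  set s := ⌊logb 2 (p (prefixOnes k) / c)⌋₊
  have hsT : s ≤ dyadicDepth p := Nat.floor_mono <| logb_le_logb_of_le one_lt_two (by linarith) <|
    div_le_div_of_nonneg_right (hmono _ _ (prefixOnes_nonneg k) (prefixOnes_le_one k)) hc.le
  obtain ⟨hK₀, hKn, -⟩ := dyadicThreshold_spec hmono hc hsT
  have hKk : dyadicThreshold p s ≤ k :=
    dyadicThreshold_le p ((le_div_iff₀ hc).1 (pow_natFloor_logb_le one_lt_two hr))
  calc p (prefixOnes k) ≤ 2 ^ (s + 1) * c :=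
        ((div_lt_iff₀ hc).1 (lt_pow_natFloor_logb_add_one one_lt_two (by linarith))).le
    _ = (dyadicCoeff p s • prefixOnes (dyadicThreshold p s)) ⬝ᵥ prefixOnes k := by
        rw [smul_dotProduct, prefixOnes_dotProduct_prefixOnes hKk hKn, smul_eq_mul, dyadicCoeff,
          div_mul_cancel₀ _ (by exact_mod_cast hK₀.ne')]
    _ ≤ dyadicWeights p ⬝ᵥ prefixOnes k := by
        rw [dyadicWeights, sum_dotProduct]
        refine single_le_sum (f := fun t => (dyadicCoeff p t • prefixOnes (dyadicThreshold p t)) ⬝ᵥ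
          prefixOnes k) (fun t _ => ?_) (mem_range.2 (Nat.lt_succ_of_le hsT))
        exact dotProduct_nonneg_of_nonneg
          (smul_nonneg (dyadicCoeff_nonneg p t) (prefixOnes_nonneg _)) (prefixOnes_nonneg k)

theorem dyadicCoeff_mul_le (hsym : ∀ (σ : Equiv.Perm (Fin n)) x, p (x ∘ σ) = p x)
    (hmono : ∀ x y, 0 ≤ x → x ≤ y → p x ≤ p y) (hc : 0 < p (prefixOnes 1)) {t : ℕ}
    (ht : t ≤ dyadicDepth p) {y : Fin n → ℝ} (hy : 0 ≤ y) :
    dyadicCoeff p t * (prefixOnes (dyadicThreshold p t) ⬝ᵥ y) ≤ 2 * p y := by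
  obtain ⟨hK₀, hKn, hK⟩ := dyadicThreshold_spec hmono hc ht
  have hK₀' : (0 : ℝ) < dyadicThreshold p t := by exact_mod_cast hK₀
  have havg := p.prefixOnes_dotProduct_mul_le hsym hmono hKn hy
  have hdot := dotProduct_nonneg_of_nonneg (prefixOnes_nonneg (dyadicThreshold p t)) hy
  rw [dyadicCoeff, div_mul_eq_mul_div, div_le_iff₀ hK₀']
  calc 2 ^ (t + 1) * p (prefixOnes 1) * (prefixOnes (dyadicThreshold p t) ⬝ᵥ y)
      = 2 * (2 ^ t * p (prefixOnes 1)) * (prefixOnes (dyadicThreshold p t) ⬝ᵥ y) := by ring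
    _ ≤ 2 * p (prefixOnes (dyadicThreshold p t)) * (prefixOnes (dyadicThreshold p t) ⬝ᵥ y) := by
        gcongr
    _ ≤ 2 * p y * dyadicThreshold p t := by linarith

theorem dyadicWeights_dotProduct_le (hsym : ∀ (σ : Equiv.Perm (Fin n)) x, p (x ∘ σ) = p x)
    (hmono : ∀ x y, 0 ≤ x → x ≤ y → p x ≤ p y) (hc : 0 < p (prefixOnes 1)) {y : Fin n → ℝ}
    (hy : 0 ≤ y) :
    dyadicWeights p ⬝ᵥ y ≤ 2 * (logb 2 (p 1 / p (prefixOnes 1)) + 1) * p y := by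
  have hρ : 1 ≤ p 1 / p (prefixOnes 1) :=
    (one_le_div hc).2 (hmono _ _ (prefixOnes_nonneg 1) (prefixOnes_le_one 1))
  rw [dyadicWeights, sum_dotProduct]
  calc ∑ t ∈ range (dyadicDepth p + 1), (dyadicCoeff p t • prefixOnes (dyadicThreshold p t)) ⬝ᵥ y
      ≤ ∑ _t ∈ range (dyadicDepth p + 1), 2 * p y := sum_le_sum fun t ht => by
        rw [smul_dotProduct, smul_eq_mul]
        exact dyadicCoeff_mul_le hsym hmono hc (Nat.le_of_lt_succ (mem_range.1 ht)) hy
    _ = 2 * (dyadicDepth p + 1) * p y := by simp; ring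
    _ ≤ 2 * (logb 2 (p 1 / p (prefixOnes 1)) + 1) * p y := by
        gcongr
        exact Nat.floor_le (logb_nonneg one_lt_two hρ)

end Dyadic

theorem symmetric_norm_ordered_approx {n : ℕ} (hn : 0 < n)
    (f : (Fin n → ℝ) → ℝ)
    (h_tri : ∀ x y : Fin n → ℝ, f (x + y) ≤ f x + f y)
    (h_hom : ∀ (c : ℝ) (x : Fin n → ℝ), f (c • x) = |c| * f x)
    (h_sym : ∀ (σ : Equiv.Perm (Fin n)) (x : Fin n → ℝ), f (x ∘ σ) = f x)
    (h_mono : ∀ x y : Fin n → ℝ, (∀ i, 0 ≤ x i) → x ≤ y → f x ≤ f y)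
    (h_pos : 0 < f (Pi.single (⟨0, hn⟩ : Fin n) 1)) :
    ∃ a : Fin n → ℝ, Antitone a ∧ (∀ i, 0 ≤ a i) ∧
      ∀ x : Fin n → ℝ, (∀ i, 0 ≤ x i) →
        f x ≤ ∑ i, a i * sortDesc x i ∧
        ∑ i, a i * sortDesc x i ≤
          2 * (Real.logb 2 (f (fun _ => 1) / f (Pi.single (⟨0, hn⟩ : Fin n) 1)) + 1) * f x := by
  let p : Seminorm ℝ (Fin n → ℝ) := Seminorm.of f h_tri fun c x => by rw [h_hom, norm_eq_abs]
  have hc : 0 < p (prefixOnes 1) := by rwa [prefixOnes_one hn]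
  refine ⟨dyadicWeights p, antitone_dyadicWeights p, dyadicWeights_nonneg p, fun x hx => ?_⟩
  have hpx : p (sortDesc x) = p x := by rw [sortDesc_eq_comp]; exact h_sym _ _
  have hx' : 0 ≤ sortDesc x := fun i => hx _
  constructor
  · exact hpx.symm.trans_le <| p.le_dotProduct_of_antitone (prefixOnes_le_dyadicWeights h_mono hc)
      (antitone_sortDesc x) hx'
  · have := dyadicWeights_dotProduct_le h_sym h_mono hc hx'
    rwa [hpx, prefixOnes_one hn] at this
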